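/- Let I ⊆ ℂ[z₁,…,z_m] be an ideal, w₀ ∈ ℂ^m, and J = 𝔪_{w₀} I. Then the characteristic space of J at w₀ is V_{w₀}(J) = {q ∈ ℂ[z] : ∂q/∂z_j ∈ V_{w₀}(I) for all j = 1,…,m}, where V_w(F) = {q : q(D)f|_w = 0 for all f ∈ F}. -/

import Mathlib

open MvPolynomial

/-- The Wirtinger partial derivative `∂f/∂z_i` of a function of `m` complex variables. -/
noncomputable def pderivFun {m : ℕ} (i : Fin m) (f : (Fin m → ℂ) → ℂ) : (Fin m → ℂ) → ℂ :=
  fun z => fderiv ℂ f z (Pi.single i 1)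

/-- The iterated derivative `∂^α f` for a multi-index `α`. -/
noncomputable def mderiv {m : ℕ} (α : Fin m → ℕ) (f : (Fin m → ℂ) → ℂ) : (Fin m → ℂ) → ℂ :=
  (List.finRange m).foldr (fun i g => (pderivFun i)^[α i] g) f

/-- The constant-coefficient differential operator `q(D) = Σ a_α ∂^α` associated to the
polynomial `q = Σ a_α z^α`. -/
noncomputable def applyDiff {m : ℕ} (q : MvPolynomial (Fin m) ℂ)
    (f : (Fin m → ℂ) → ℂ) : (Fin m → ℂ) → ℂ :=
  fun z => ∑ α ∈ q.support, q.coeff α * mderiv (fun i => α i) f z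

/-- The characteristic space at `w` of an ideal `I`:
`V_w(I) = {q : q(D)f|_w = 0 for all f ∈ I}`. -/
def charSpaceI {m : ℕ} (w : Fin m → ℂ) (I : Ideal (MvPolynomial (Fin m) ℂ)) :
    Set (MvPolynomial (Fin m) ℂ) :=
  {q | ∀ p ∈ I, applyDiff q (fun z => MvPolynomial.eval z p) w = 0}

/-!
On polynomials, `q(D)` is the linear operator `diffOp q` sending `z^α` to `∂^α`, and the Leibniz
rule `q(D)((z_j - c) f) = (z_j - c) q(D) f + (∂q/∂z_j)(D) f` turns, at `c = w₀ⱼ` and after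
evaluation at `w₀`, into `q(D)((z_j - w₀ⱼ) f)(w₀) = (∂q/∂z_j)(D) f (w₀)`. Since `𝔪_{w₀}` is
generated by the `z_j - w₀ⱼ` and `I` is an ideal, `𝔪_{w₀} I` is the ℂ-span of the products
`(z_j - w₀ⱼ) f` with `f ∈ I`, and `p ↦ q(D)p(w₀)` is ℂ-linear; so it vanishes on `𝔪_{w₀} I`
exactly when every `∂q/∂z_j` annihilates `I` at `w₀`.
-/

namespace Derivation

variable {R A : Type*} [CommSemiring R] [CommSemiring A] [Algebra R A] (D : Derivation R A A)
  {g : A}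

theorem iterate_mul_of_apply_eq_zero (hg : D g = 0) (n : ℕ) (f : A) :
    (⇑D)^[n] (g * f) = g * (⇑D)^[n] f := by
  induction n with
  | zero => rfl
  | succ n ih => rw [Function.iterate_succ_apply', ih, leibniz, hg, smul_zero, add_zero,
      smul_eq_mul, Function.iterate_succ_apply']

theorem iterate_mul_of_apply_eq_one (hg : D g = 1) (n : ℕ) (f : A) :
    (⇑D)^[n] (g * f) = g * (⇑D)^[n] f + n • (⇑D)^[n - 1] f := by
  induction n with
  | zero => simp
  | succ n ih =>
    rcases n with _ | n
    · simp [leibniz, hg]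
    · simp only [Function.iterate_succ_apply' _ (n + 1), ih, map_add, map_nsmul, leibniz, hg,
        smul_eq_mul, mul_one, Nat.add_sub_cancel]
      rw [← Function.iterate_succ_apply' (⇑D) n]
      module

end Derivation

theorem Ideal.restrictScalars_span_mul_le {R A : Type*} [CommSemiring R] [CommSemiring A]
    [Algebra R A] {S : Set A} {I : Ideal A} {P : Submodule R A}
    (h : ∀ s ∈ S, ∀ f ∈ I, s * f ∈ P) : (Ideal.span S * I).restrictScalars R ≤ P := by
  intro x hx
  rw [Submodule.restrictScalars_mem] at hx
  refine Submodule.mul_induction_on hx (fun g hg f hf => ?_) fun _ _ => P.add_mem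
  induction hg using Submodule.span_induction generalizing f with
  | mem s hs => exact h s hs f hf
  | zero => simpa only [zero_mul] using P.zero_mem
  | add g₁ g₂ _ _ h₁ h₂ => simpa only [add_mul] using P.add_mem (h₁ f hf) (h₂ f hf)
  | smul r g _ hg =>
    simpa only [smul_eq_mul, mul_assoc, mul_left_comm r] using hg (r * f) (I.mul_mem_left r hf)

namespace MvPolynomial

theorem hasFDerivAt_eval {σ 𝕜 : Type*} [Fintype σ] [NontriviallyNormedField 𝕜] (p : MvPolynomial σ 𝕜) (z : σ → 𝕜) :
    HasFDerivAt (fun z => eval z p)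
      (∑ j, eval z (pderiv j p) • (ContinuousLinearMap.proj j : (σ → 𝕜) →L[𝕜] 𝕜)) z := by
  classical
  induction p using MvPolynomial.induction_on generalizing z with
  | C a =>
    simp only [eval_C]
    refine (hasFDerivAt_const (𝕜 := 𝕜) a z).congr_fderiv ?_
    ext v
    simp
  | add p q hp hq =>
    simp only [map_add]
    refine ((hp z).add (hq z)).congr_fderiv ?_
    ext v
    simp [add_mul, Finset.sum_add_distrib]
  | mul_X p i hp =>
    simp only [eval_mul, eval_X]
    refine ((hp z).mul (hasFDerivAt_apply i z)).congr_fderiv ?_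
    ext v
    simp [pderiv_X, Pi.single_apply, apply_ite (eval z), Finset.sum_add_distrib, Finset.mul_sum,
      mul_add, mul_comm, mul_left_comm]

section Algebra

variable {σ R : Type*} [CommRing R]

noncomputable def iteratedPDeriv (l : List σ) (α : σ → ℕ) : Module.End R (MvPolynomial σ R) :=
  (l.map fun i => (pderiv i).toLinearMap ^ α i).prod

theorem iteratedPDeriv_cons_apply (i : σ) (l : List σ) (α : σ → ℕ) (p : MvPolynomial σ R) :
    iteratedPDeriv (i :: l) α p = (⇑(pderiv i))^[α i] (iteratedPDeriv l α p) := by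
  simp [iteratedPDeriv, Module.End.mul_apply, Module.End.pow_apply]

theorem iteratedPDeriv_congr {l : List σ} {α β : σ → ℕ} (h : ∀ i ∈ l, α i = β i) :
    iteratedPDeriv (R := R) l α = iteratedPDeriv l β := by
  rw [iteratedPDeriv, iteratedPDeriv, List.map_congr_left fun i hi => by rw [h i hi]]

theorem iteratedPDeriv_X_sub_C_mul_of_notMem {l : List σ} {j : σ} (hj : j ∉ l) (α : σ → ℕ)
    (c : R) (f : MvPolynomial σ R) :
    iteratedPDeriv l α ((X j - C c) * f) = (X j - C c) * iteratedPDeriv l α f := by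
  induction l with
  | nil => rfl
  | cons i l ih =>
    rw [List.mem_cons, not_or] at hj
    have hX : pderiv i (X j - C c) = 0 := by simp [pderiv_X_of_ne hj.1]
    rw [iteratedPDeriv_cons_apply, ih hj.2, Derivation.iterate_mul_of_apply_eq_zero _ hX,
      iteratedPDeriv_cons_apply]

theorem iteratedPDeriv_X_sub_C_mul_of_mem [DecidableEq σ] {l : List σ} (hl : l.Nodup) {j : σ}
    (hj : j ∈ l) (α : σ → ℕ) (c : R) (f : MvPolynomial σ R) :
    iteratedPDeriv l α ((X j - C c) * f) =
      (X j - C c) * iteratedPDeriv l α f + α j • iteratedPDeriv l (α - Pi.single j 1) f := by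
  induction l with
  | nil => simp at hj
  | cons i l ih =>
    rw [List.nodup_cons] at hl
    simp only [iteratedPDeriv_cons_apply]
    obtain rfl | hji := eq_or_ne j i
    · have hα : iteratedPDeriv l (α - Pi.single j 1) = iteratedPDeriv (R := R) l α :=
        iteratedPDeriv_congr fun i hi => by
          simp [Pi.single_eq_of_ne (ne_of_mem_of_not_mem hi hl.1)]
      rw [iteratedPDeriv_X_sub_C_mul_of_notMem hl.1, hα,
        Derivation.iterate_mul_of_apply_eq_one _ (by simp), Pi.sub_apply, Pi.single_eq_same]
    · have hX : pderiv i (X j - C c) = 0 := by simp [pderiv_X_of_ne hji]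
      rw [ih hl.2 (List.mem_of_ne_of_mem hji hj), iterate_map_add, iterate_map_nsmul,
        Derivation.iterate_mul_of_apply_eq_zero _ hX, Pi.sub_apply, Pi.single_eq_of_ne hji.symm,
        tsub_zero]

theorem X_sub_C_mem_ker_eval (w : σ → R) (j : σ) : X j - C (w j) ∈ RingHom.ker (eval w) := by
  simp [RingHom.mem_ker]

theorem sub_C_eval_mem_span_X_sub_C (w : σ → R) (p : MvPolynomial σ R) :
    p - C (eval w p) ∈ Ideal.span (Set.range fun j => X j - C (w j)) := by
  induction p using MvPolynomial.induction_on with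
  | C a => simp
  | add p q hp hq =>
    rw [map_add, map_add, add_sub_add_comm]
    exact Ideal.add_mem _ hp hq
  | mul_X p i hp =>
    have hsplit : p * X i - C (eval w (p * X i)) =
        p * (X i - C (w i)) + C (w i) * (p - C (eval w p)) := by
      simp only [map_mul, eval_X]
      ring
    rw [hsplit]
    exact Ideal.add_mem _ (Ideal.mul_mem_left _ _ (Ideal.subset_span ⟨i, rfl⟩))
      (Ideal.mul_mem_left _ _ hp)

theorem ker_eval_le_span_X_sub_C (w : σ → R) :
    RingHom.ker (eval w) ≤ Ideal.span (Set.range fun j => X j - C (w j)) := fun p hp => by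
  simpa [RingHom.mem_ker.mp hp] using sub_C_eval_mem_span_X_sub_C w p

section diffOp

variable {m : ℕ}

/-- `q ↦ q(D)` on polynomials: the linear map sending each monomial `z^α` to `∂^α`. -/
noncomputable def diffOp : MvPolynomial (Fin m) R →ₗ[R] Module.End R (MvPolynomial (Fin m) R) :=
  (basisMonomials (Fin m) R).constr R fun α => iteratedPDeriv (List.finRange m) ⇑α

theorem diffOp_apply (q p : MvPolynomial (Fin m) R) :
    diffOp q p = ∑ α ∈ q.support, q.coeff α • iteratedPDeriv (List.finRange m) α p := by
  rw [diffOp, Module.Basis.constr_apply, Finsupp.sum, LinearMap.sum_apply]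
  rfl

theorem diffOp_monomial (α : Fin m →₀ ℕ) (a : R) :
    diffOp (monomial α a) = a • iteratedPDeriv (List.finRange m) α := by
  have hα : monomial α a = a • basisMonomials (Fin m) R α := by simp [smul_monomial]
  rw [hα, map_smul, diffOp, Module.Basis.constr_basis]

theorem diffOp_X_sub_C_mul (q : MvPolynomial (Fin m) R) (j : Fin m) (c : R)
    (f : MvPolynomial (Fin m) R) :
    diffOp q ((X j - C c) * f) = (X j - C c) * diffOp q f + diffOp (pderiv j q) f := by
  induction q using MvPolynomial.induction_on' with
  | monomial α a =>
    rw [pderiv_monomial, diffOp_monomial, diffOp_monomial]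
    simp only [LinearMap.smul_apply]
    rw [iteratedPDeriv_X_sub_C_mul_of_mem (List.nodup_finRange m) (List.mem_finRange j),
      Finsupp.coe_tsub, Finsupp.single_eq_pi_single, smul_add, mul_smul_comm, mul_smul, Nat.cast_smul_eq_nsmul]
  | add q₁ q₂ h₁ h₂ =>
    simp only [map_add, LinearMap.add_apply, h₁, h₂]
    ring

theorem eval_diffOp_X_sub_C_mul (q f : MvPolynomial (Fin m) R) (w : Fin m → R) (j : Fin m) :
    eval w (diffOp q ((X j - C (w j)) * f)) = eval w (diffOp (pderiv j q) f) := by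
  simp [diffOp_X_sub_C_mul]

end diffOp

end Algebra

end MvPolynomial

section applyDiff

variable {m : ℕ}

theorem pderivFun_eval (i : Fin m) (p : MvPolynomial (Fin m) ℂ) :
    pderivFun i (fun z => eval z p) = fun z => eval z (pderiv i p) := by
  funext z
  simp [pderivFun, (MvPolynomial.hasFDerivAt_eval p z).fderiv, Pi.single_apply]

theorem iterate_pderivFun_eval (i : Fin m) (n : ℕ) (p : MvPolynomial (Fin m) ℂ) :
    (pderivFun i)^[n] (fun z => eval z p) = fun z => eval z ((⇑(pderiv i))^[n] p) :=
  have h : Function.Semiconj (fun p z => eval z p) (pderiv i) (pderivFun i) :=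
    fun p => (pderivFun_eval i p).symm
  (h.iterate_right n p).symm

theorem foldr_iterate_pderivFun_eval (l : List (Fin m)) (α : Fin m → ℕ)
    (p : MvPolynomial (Fin m) ℂ) :
    l.foldr (fun i g => (pderivFun i)^[α i] g) (fun z => eval z p) =
      fun z => eval z (iteratedPDeriv l α p) := by
  induction l with
  | nil => rfl
  | cons i l ih => rw [List.foldr_cons, ih, iterate_pderivFun_eval, iteratedPDeriv_cons_apply]

theorem applyDiff_eval (q p : MvPolynomial (Fin m) ℂ) (w : Fin m → ℂ) :
    applyDiff q (fun z => eval z p) w = eval w (diffOp q p) := by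
  simp only [applyDiff, mderiv, foldr_iterate_pderivFun_eval, diffOp_apply, map_sum, smul_eval]

end applyDiff

/-- For an ideal `I ⊆ ℂ[z₁,…,z_m]`, a point `w₀`, and `J = 𝔪_{w₀} I`,
the characteristic space of `J` at `w₀` is
`V_{w₀}(J) = {q : ∂q/∂z_j ∈ V_{w₀}(I) for all j}`. -/
theorem stmt6 {m : ℕ} (I : Ideal (MvPolynomial (Fin m) ℂ)) (w₀ : Fin m → ℂ) :
    charSpaceI w₀ (RingHom.ker (MvPolynomial.eval w₀ :
        MvPolynomial (Fin m) ℂ →+* ℂ) * I) =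
      {q : MvPolynomial (Fin m) ℂ |
        ∀ j : Fin m, MvPolynomial.pderiv j q ∈ charSpaceI w₀ I} := by
  ext q
  simp only [charSpaceI, Set.mem_ofPred_eq, applyDiff_eval]
  constructor
  · intro hq j f hf
    rw [← eval_diffOp_X_sub_C_mul]
    exact hq _ (Ideal.mul_mem_mul (X_sub_C_mem_ker_eval w₀ j) hf)
  · intro hq p hp
    let P := LinearMap.ker ((aeval w₀).toLinearMap ∘ₗ diffOp q)
    have hP : (Ideal.span (Set.range fun j => X j - C (w₀ j)) * I).restrictScalars ℂ ≤ P :=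
      Ideal.restrictScalars_span_mul_le <| by
        rintro _ ⟨j, rfl⟩ f hf
        simpa [P, eval_diffOp_X_sub_C_mul] using hq j f hf
    simpa [P] using hP (Ideal.mul_mono_left (ker_eval_le_span_X_sub_C w₀) hp)
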